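/- Let E be a real Hilbert space and let F : E → ℝ be differentiable, L-smooth with L > 0, and μ-strongly convex with μ > 0, with global minimizer W_g* ∈ E and optimal value F* = F(W_g*). Then for all W̄, W* ∈ E and every γ ≥ 0: −2γ⟨W̄ − W*, ∇F(W̄)⟩ ≤ (γ² − γ/L)‖∇F(W̄)‖² + (2/μ)(F(W*) − F*) + 2γ(F* − F(W̄)). -/

import Mathlib

open scoped RealInnerProductSpace

/-!
Split `W̄ - W*` through the minimizer `W_g*`. Along `W̄ - W_g*`, convexity and `L`-smoothness give
`F W̄ + ⟪∇F W̄, W_g* - W̄⟫ + ‖∇F W̄‖² / (2L) ≤ F*`: evaluate the descent lemma at `W_g*` and the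
supporting hyperplane at `W̄` at the point `W_g* + ∇F W̄ / L`. Along `W* - W_g*`, AM–GM and the
quadratic growth `μ/2 ‖W* - W_g*‖² ≤ F W* - F*` of a strongly convex function finish the bound.
-/

section Smooth

variable {E : Type*} [NormedAddCommGroup E] [InnerProductSpace ℝ E] [CompleteSpace E] {F : E → ℝ}

theorem IsLocalMin.gradient_eq_zero {x : E} (h : IsLocalMin F x) : gradient F x = 0 := by
  rw [gradient, h.fderiv_eq_zero, map_zero]

theorem HasGradientAt.hasDerivAt_comp_add_smul {x v g : E} {t : ℝ}
    (h : HasGradientAt F g (x + t • v)) :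
    HasDerivAt (fun s : ℝ => F (x + s • v)) ⟪g, v⟫ t := by
  have hline : HasDerivAt (fun s : ℝ => x + s • v) v t := by
    simpa using ((hasDerivAt_id t).smul_const v).const_add x
  have := h.hasFDerivAt.comp_hasDerivAt t hline
  rwa [InnerProductSpace.toDual_apply_apply] at this

theorem le_add_inner_gradient_add_sq_of_lipschitz {L : ℝ} (hdiff : Differentiable ℝ F)
    (hsmooth : ∀ x y, ‖gradient F x - gradient F y‖ ≤ L * ‖x - y‖) (x y : E) :
    F y ≤ F x + ⟪gradient F x, y - x⟫ + L / 2 * ‖y - x‖ ^ 2 := by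
  set v := y - x
  -- `φ` is antitone on `[0, ∞)`; comparing `φ 1` with `φ 0` is the claim.
  let φ : ℝ → ℝ := fun t => F (x + t • v) - t * ⟪gradient F x, v⟫ - L / 2 * t ^ 2 * ‖v‖ ^ 2
  let φ' : ℝ → ℝ := fun t => ⟪gradient F (x + t • v), v⟫ - ⟪gradient F x, v⟫ - L * t * ‖v‖ ^ 2
  have hφ : ∀ t, HasDerivAt φ (φ' t) t := fun t => by
    refine ((((hdiff _).hasGradientAt.hasDerivAt_comp_add_smul (x := x) (v := v)).sub
      ((hasDerivAt_id t).mul_const ⟪gradient F x, v⟫)).sub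
      (((hasDerivAt_pow 2 t).const_mul (L / 2)).mul_const (‖v‖ ^ 2))).congr_deriv ?_
    simp only [φ', Nat.cast_ofNat]
    ring
  have hφ'_nonpos : ∀ t ∈ interior (Set.Ici (0 : ℝ)), φ' t ≤ 0 := by
    intro t ht
    rw [interior_Ici] at ht
    have hlip : ‖gradient F (x + t • v) - gradient F x‖ ≤ L * (t * ‖v‖) := by
      simpa [norm_smul, abs_of_pos (Set.mem_Ioi.mp ht)] using hsmooth (x + t • v) x
    calc φ' t = ⟪gradient F (x + t • v) - gradient F x, v⟫ - L * t * ‖v‖ ^ 2 := by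
          rw [inner_sub_left]
      _ ≤ ‖gradient F (x + t • v) - gradient F x‖ * ‖v‖ - L * t * ‖v‖ ^ 2 := by
          gcongr; exact real_inner_le_norm _ _
      _ ≤ L * (t * ‖v‖) * ‖v‖ - L * t * ‖v‖ ^ 2 := by gcongr
      _ = 0 := by ring
  have hanti : AntitoneOn φ (Set.Ici 0) :=
    antitoneOn_of_hasDerivWithinAt_nonpos (convex_Ici 0)
      (fun t _ => (hφ t).continuousAt.continuousWithinAt)
      (fun t _ => (hφ t).hasDerivWithinAt) hφ'_nonpos
  have h10 : φ 1 ≤ φ 0 := hanti Set.self_mem_Ici (by norm_num : (0 : ℝ) ≤ 1) zero_le_one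
  simp only [φ, v, one_smul, zero_smul, add_zero, add_sub_cancel] at h10
  linarith

theorem add_inner_gradient_add_sq_div_le_of_gradient_eq_zero {L : ℝ} (hL : 0 < L)
    (hdiff : Differentiable ℝ F)
    (hsmooth : ∀ x y, ‖gradient F x - gradient F y‖ ≤ L * ‖x - y‖) {x₀ x : E}
    (h₀ : gradient F x₀ = 0) (hconv : ∀ y, F x + ⟪gradient F x, y - x⟫ ≤ F y) :
    F x + ⟪gradient F x, x₀ - x⟫ + ‖gradient F x‖ ^ 2 / (2 * L) ≤ F x₀ := by
  set g := gradient F x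
  -- The descent lemma at `x₀` and the supporting hyperplane at `x` are compared at `z`.
  set z := x₀ + L⁻¹ • g
  have hdescent : F z ≤ F x₀ + ‖g‖ ^ 2 / (2 * L) := by
    have h := le_add_inner_gradient_add_sq_of_lipschitz hdiff hsmooth x₀ z
    rwa [h₀, inner_zero_left, add_sub_cancel_left, norm_smul, mul_pow, Real.norm_eq_abs, sq_abs,
      add_zero, show L / 2 * (L⁻¹ ^ 2 * ‖g‖ ^ 2) = ‖g‖ ^ 2 / (2 * L) by field_simp] at h
  have hsupport : F x + ⟪g, x₀ - x⟫ + ‖g‖ ^ 2 / L ≤ F z := by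
    have h := hconv z
    rwa [(add_sub_right_comm x₀ (L⁻¹ • g) x : z - x = x₀ - x + L⁻¹ • g), inner_add_right,
      real_inner_smul_right, real_inner_self_eq_norm_sq, ← div_eq_inv_mul, ← add_assoc] at h
  have hhalf : ‖g‖ ^ 2 / (2 * L) = ‖g‖ ^ 2 / L - ‖g‖ ^ 2 / (2 * L) := by
    field_simp; ring
  linarith

end Smooth

theorem two_mul_mul_inner_le_norm_sq_add {E : Type*} [SeminormedAddCommGroup E]
    [InnerProductSpace ℝ E] (u v : E) (γ : ℝ) :
    2 * γ * ⟪u, v⟫ ≤ ‖u‖ ^ 2 + γ ^ 2 * ‖v‖ ^ 2 := by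
  have h := norm_sub_sq_real u (γ • v)
  rw [real_inner_smul_right, norm_smul, mul_pow, Real.norm_eq_abs, sq_abs] at h
  nlinarith [sq_nonneg ‖u - γ • v‖]

/-- Bound B1 of the proof of Theorem 1: the cross term between the
aggregated-model displacement W̄ − W* and the guiding-task gradient ∇F(W̄). -/
theorem guiding_cross_term_bound
    {E : Type*} [NormedAddCommGroup E] [InnerProductSpace ℝ E] [CompleteSpace E]
    (F : E → ℝ) (L μ : ℝ) (hL : 0 < L) (hμ : 0 < μ)
    (hdiff : Differentiable ℝ F)
    (hsmooth : ∀ x y : E, ‖gradient F x - gradient F y‖ ≤ L * ‖x - y‖)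
    (hsc : ∀ x y : E, F y ≥ F x + ⟪gradient F x, y - x⟫ + μ / 2 * ‖y - x‖ ^ 2)
    (Wg : E) (hWg : ∀ x : E, F Wg ≤ F x) (Fstar : ℝ) (hFstar : Fstar = F Wg) :
    ∀ (Wbar Wstar : E) (γ : ℝ), 0 ≤ γ →
      -(2 * γ) * ⟪Wbar - Wstar, gradient F Wbar⟫ ≤
        (γ ^ 2 - γ / L) * ‖gradient F Wbar‖ ^ 2
          + 2 / μ * (F Wstar - Fstar) + 2 * γ * (Fstar - F Wbar) := by
  intro Wbar Wstar γ hγ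
  subst hFstar
  set g := gradient F Wbar
  have hg₀ : gradient F Wg = 0 := IsLocalMin.gradient_eq_zero (.of_forall hWg)
  have hC1 : F Wbar + ⟪g, Wg - Wbar⟫ + ‖g‖ ^ 2 / (2 * L) ≤ F Wg :=
    add_inner_gradient_add_sq_div_le_of_gradient_eq_zero hL hdiff hsmooth hg₀
      fun y => by linarith [hsc Wbar y, (by positivity : 0 ≤ μ / 2 * ‖y - Wbar‖ ^ 2)]
  have hC2 : ‖Wstar - Wg‖ ^ 2 ≤ 2 / μ * (F Wstar - F Wg) := by
    have h := hsc Wg Wstar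
    rw [hg₀, inner_zero_left, add_zero] at h
    rw [div_mul_eq_mul_div, le_div_iff₀ hμ]
    linarith
  have hsplit :
      -(2 * γ) * ⟪Wbar - Wstar, g⟫ = 2 * γ * ⟪g, Wg - Wbar⟫ + 2 * γ * ⟪Wstar - Wg, g⟫ := by
    rw [show Wbar - Wstar = -(Wg - Wbar) - (Wstar - Wg) by abel, inner_sub_left, inner_neg_left,
      real_inner_comm]
    ring
  have hγL : 2 * γ * (‖g‖ ^ 2 / (2 * L)) = γ / L * ‖g‖ ^ 2 := by field_simp
  linarith [mul_le_mul_of_nonneg_left hC1 (by positivity : (0 : ℝ) ≤ 2 * γ),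
    two_mul_mul_inner_le_norm_sq_add (Wstar - Wg) g γ]
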